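/- Let A > 0 and B ≥ 0, not both zero, and let (x, y) solve x'(s) = x(s)y(s) + A, y'(s) = -x(s)^2 - B on ℝ. Define θ(s) = ∫₀^s x(s') ds' and X(s) = e^{iθ(s)}(x(s) + i y(s))/(A - iB). Then |X(s)|·X'(s)/X(s) → (B + iA)/√(A² + B²) as s → +∞ and |X(s)|·X'(s)/X(s) → -(B + iA)/√(A² + B²) as s → -∞. -/

import Mathlib

/-!
Since `y' = -x² - B ≤ 0`, `y` decreases. If it stayed bounded below, then for a suitable `c ≥ 0`
the function `x - c y` would grow linearly, so `x → ∞` and `y' ≤ -1` eventually, a contradiction;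
hence `y → -∞`. Once `y` is very negative, `x' = xy + A` drives `x` towards `0`, so `x → 0`.
Writing `z = x + iy` and `c = A - iB`, the curve satisfies `X' = e^{iθ}`, hence
`|X| X'/X = (c/|c|) · |z|/z`, and `|z|/z → i` because `z` is asymptotically `iy` with `y → -∞`.
The time reversal `(x, y)(s) ↦ (-x(-s), -y(-s))` preserves the system, which gives `s → -∞`.
-/

open Filter Topology Set Complex

theorem tendsto_atTop_of_hasDerivAt_of_eventually_le {f f' : ℝ → ℝ} {a : ℝ} (ha : 0 < a)
    (hf : ∀ s, HasDerivAt f (f' s) s) (hf' : ∀ᶠ s in atTop, a ≤ f' s) :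
    Tendsto f atTop atTop := by
  obtain ⟨s₀, hs₀⟩ := eventually_atTop.mp hf'
  have hg : ∀ s, HasDerivAt (fun s => f s - a * s) (f' s - a) s := fun s => by
    simpa using (hf s).fun_sub ((hasDerivAt_id s).const_mul a)
  have hmono : MonotoneOn (fun s => f s - a * s) (Ici s₀) := by
    refine monotoneOn_of_hasDerivWithinAt_nonneg (convex_Ici s₀)
      (fun s _ => (hg s).continuousAt.continuousWithinAt)
      (fun s _ => (hg s).hasDerivWithinAt) fun s hs => ?_
    rw [interior_Ici] at hs
    linarith [hs₀ s (le_of_lt hs)]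
  have hlin : Tendsto (fun s => a * s + (f s₀ - a * s₀)) atTop atTop :=
    tendsto_atTop_add_const_right _ _ (tendsto_id.const_mul_atTop ha)
  refine tendsto_atTop_mono' _ (eventually_atTop.mpr ⟨s₀, fun s hs => ?_⟩) hlin
  linarith [hmono self_mem_Ici hs hs]

theorem eventually_le_of_hasDerivAt_of_le_neg {g g' : ℝ → ℝ} {r δ : ℝ} (hδ : 0 < δ)
    (hg : ∀ s, HasDerivAt g (g' s) s) (hg' : ∀ᶠ s in atTop, r ≤ g s → g' s ≤ -δ) :
    ∀ᶠ s in atTop, g s ≤ r := by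
  obtain ⟨s₀, hs₀⟩ := eventually_atTop.mp hg'
  obtain ⟨s₁, hs₀₁, hs₁⟩ : ∃ s₁ ≥ s₀, g s₁ ≤ r := by
    by_contra! hgt
    have hdiv : Tendsto (fun s => -g s) atTop atTop :=
      tendsto_atTop_of_hasDerivAt_of_eventually_le hδ (fun s => (hg s).fun_neg)
        (eventually_atTop.mpr ⟨s₀, fun s hs => by linarith [hs₀ s hs (hgt s hs).le]⟩)
    obtain ⟨s, hs, hgs⟩ := ((hdiv.eventually_ge_atTop (-r)).and (eventually_ge_atTop s₀)).exists
    linarith [hgt s hgs]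
  refine eventually_atTop.mpr ⟨s₁, fun s hs => ?_⟩
  refine image_le_of_deriv_right_lt_deriv_boundary (B := fun _ => r) (B' := fun _ => 0)
    (fun t _ => (hg t).continuousAt.continuousWithinAt) (fun t _ => (hg t).hasDerivWithinAt)
    hs₁ (fun _ => hasDerivAt_const _ r) (fun t ht hgt => ?_) ⟨hs, le_rfl⟩
  linarith [hs₀ t (hs₀₁.trans ht.1) hgt.ge]

theorem HasDerivAt.neg_comp_neg {f : ℝ → ℝ} {f' s : ℝ} (hf : HasDerivAt f f' (-s)) :
    HasDerivAt (fun u => -f (-u)) f' s := by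
  simpa [Function.comp_def] using (hf.comp s (hasDerivAt_neg s)).fun_neg

theorem Complex.tendsto_norm_div_self_of_im_neg {α : Type*} {l : Filter α} {z : α → ℂ}
    (hre : Tendsto (fun a => (z a).re / (z a).im) l (𝓝 0)) (him : ∀ᶠ a in l, (z a).im < 0) :
    Tendsto (fun a => (‖z a‖ : ℂ) / z a) l (𝓝 I) := by
  set g : ℝ → ℂ := fun w => -(√(w ^ 2 + 1) : ℂ) / (w + I)
  have hg : ContinuousAt g 0 := by
    refine ContinuousAt.div (by fun_prop) (by fun_prop) ?_
    simp
  have hg0 : g 0 = I := by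
    simp [g]
  refine (hg0 ▸ hg.tendsto.comp hre).congr' ?_
  have hpolar : ∀ v w : ℝ, v < 0 → g w = (‖(v : ℂ) * (w + I)‖ : ℂ) / (v * (w + I)) := by
    intro v w hv
    have hwI : (w : ℂ) + I ≠ 0 := fun h => by simpa using congrArg Complex.im h
    have hnorm : ‖(w : ℂ) + I‖ = √(w ^ 2 + 1) := by simpa using norm_add_mul_I w 1
    rw [norm_mul, norm_real, Real.norm_of_nonpos hv.le, hnorm,
      div_eq_div_iff hwI (by simp [hv.ne, hwI])]
    push_cast
    field_simp [hv.ne]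
  filter_upwards [him] with a ha
  have hz : z a = (z a).im * (((z a).re / (z a).im : ℝ) + I) := by
    apply Complex.ext <;> simp [mul_div_cancel₀ _ ha.ne]
  rw [Function.comp_apply, hpolar _ _ ha, ← hz]

theorem Complex.tendsto_norm_div_self_of_im_pos {α : Type*} {l : Filter α} {z : α → ℂ}
    (hre : Tendsto (fun a => (z a).re / (z a).im) l (𝓝 0)) (him : ∀ᶠ a in l, 0 < (z a).im) :
    Tendsto (fun a => (‖z a‖ : ℂ) / z a) l (𝓝 (-I)) := by
  have := tendsto_norm_div_self_of_im_neg (z := fun a => -z a)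
    (by simpa [neg_div_neg_eq] using hre) (by simpa using him)
  simpa [div_neg] using this.neg

theorem Complex.norm_mul_div_eq_of_norm_eq_one {e : ℂ} (he : ‖e‖ = 1) (z c : ℂ) :
    (‖e * z / c‖ : ℂ) * e / (e * z / c) = c / ‖c‖ * (‖z‖ / z) := by
  rcases eq_or_ne z 0 with rfl | hz
  · simp
  rcases eq_or_ne c 0 with rfl | hc
  · simp
  have he0 : e ≠ 0 := by rintro rfl; simp at he
  rw [norm_div, norm_mul, he, one_mul]
  push_cast
  field_simp

namespace SelfSimilarODE

variable {A B : ℝ} {x y : ℝ → ℝ}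

theorem tendsto_y_atTop_atBot (hA : 0 < A) (hB : 0 ≤ B)
    (hx : ∀ s, HasDerivAt x (x s * y s + A) s) (hy : ∀ s, HasDerivAt y (-(x s) ^ 2 - B) s) :
    Tendsto y atTop atBot := by
  have hanti : Antitone y := antitone_of_hasDerivAt_nonpos hy fun s => by
    simp only [Pi.zero_apply]; nlinarith [sq_nonneg (x s)]
  rw [tendsto_atTop_atBot_iff_of_antitone hanti]
  by_contra! hbdd
  obtain ⟨b, hb⟩ := hbdd
  set c := (b ^ 2 + y 0 ^ 2) / (2 * A) with hc
  have hc0 : 0 ≤ c := by positivity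
  -- On `[0, ∞)` we have `y ^ 2 ≤ 2 A c`, which makes `x - c y` grow at rate at least `A / 2`.
  have hysq : ∀ s ≥ 0, y s ^ 2 ≤ 2 * A * c := fun s hs => by
    have h2Ac : 2 * A * c = b ^ 2 + y 0 ^ 2 := by rw [hc]; field_simp
    have hys₀ := hanti hs
    have hbys := hb s
    rw [h2Ac]
    rcases le_or_gt 0 (y s) with h | h <;> nlinarith
  have hgrow : Tendsto (fun s => x s - c * y s) atTop atTop := by
    refine tendsto_atTop_of_hasDerivAt_of_eventually_le (half_pos hA)
      (fun s => (hx s).fun_sub ((hy s).const_mul c)) ?_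
    filter_upwards [eventually_ge_atTop 0] with s hs
    nlinarith [sq_nonneg (x s * y s + A), mul_le_mul_of_nonneg_left (hysq s hs) (sq_nonneg (x s)),
      mul_nonneg hc0 hB]
  have hxTop : Tendsto x atTop atTop :=
    tendsto_atTop_mono (fun s => by nlinarith [hb s])
      (tendsto_atTop_add_const_right _ (c * b) hgrow)
  have hyBot : Tendsto y atTop atBot := by
    rw [← tendsto_neg_atTop_iff]
    refine tendsto_atTop_of_hasDerivAt_of_eventually_le one_pos (fun s => (hy s).fun_neg) ?_
    filter_upwards [hxTop.eventually_ge_atTop 1] with s hs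
    nlinarith
  obtain ⟨s, hs⟩ := (hyBot.eventually_le_atBot b).exists
  exact (hb s).not_ge hs

theorem tendsto_x_atTop_zero (hx : ∀ s, HasDerivAt x (x s * y s + A) s)
    (hy : Tendsto y atTop atBot) : Tendsto x atTop (𝓝 0) := by
  -- Where `y ≤ -(|A| + ε) / ε`, `x ^ 2` decreases at rate `≥ 2 ε ^ 2` as long as `x ^ 2 ≥ ε ^ 2`.
  have hsq : ∀ ε > 0, ∀ᶠ s in atTop, x s ^ 2 ≤ ε ^ 2 := fun ε hε => by
    refine eventually_le_of_hasDerivAt_of_le_neg (g' := fun s => 2 * x s * (x s * y s + A))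
      (δ := 2 * ε ^ 2) (by positivity) (fun s => by simpa using (hx s).fun_pow 2) ?_
    filter_upwards [hy.eventually_le_atBot (-(|A| + ε) / ε)] with s hys hxs
    have hyε : ε * y s ≤ -(|A| + ε) := by rwa [le_div_iff₀ hε, mul_comm] at hys
    have hxε : ε ≤ |x s| := by simpa [abs_of_pos hε] using sq_le_sq.mp hxs
    have hεx : ε * |x s| ≤ x s ^ 2 := by
      nlinarith [sq_abs (x s), mul_le_mul_of_nonneg_right hxε (abs_nonneg (x s))]
    have hAx : A * x s ≤ |A| * |x s| := by rw [← abs_mul]; exact le_abs_self _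
    refine le_of_mul_le_mul_left ?_ hε
    nlinarith [mul_le_mul_of_nonneg_left hyε (sq_nonneg (x s)),
      mul_le_mul_of_nonneg_left hεx (abs_nonneg A)]
  refine Metric.tendsto_nhds.mpr fun ε hε => ?_
  filter_upwards [hsq (ε / 2) (half_pos hε)] with s hs
  rw [Real.dist_eq, sub_zero]
  linarith [abs_le_of_sq_le_sq hs (half_pos hε).le]

theorem hasDerivAt_reverse_x (hx : ∀ s, HasDerivAt x (x s * y s + A) s) (s : ℝ) :
    HasDerivAt (fun u => -x (-u)) (-x (-s) * -y (-s) + A) s :=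
  (hx (-s)).neg_comp_neg.congr_deriv (by ring)

theorem hasDerivAt_reverse_y (hy : ∀ s, HasDerivAt y (-(x s) ^ 2 - B) s) (s : ℝ) :
    HasDerivAt (fun u => -y (-u)) (-(-x (-s)) ^ 2 - B) s :=
  (hy (-s)).neg_comp_neg.congr_deriv (by ring)

theorem tendsto_y_atBot_atTop (hA : 0 < A) (hB : 0 ≤ B)
    (hx : ∀ s, HasDerivAt x (x s * y s + A) s) (hy : ∀ s, HasDerivAt y (-(x s) ^ 2 - B) s) :
    Tendsto y atBot atTop := by
  have := tendsto_comp_neg_atBot_iff.mpr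
    (tendsto_y_atTop_atBot hA hB (hasDerivAt_reverse_x hx) (hasDerivAt_reverse_y hy))
  simpa [tendsto_neg_atBot_iff] using this

theorem tendsto_x_atBot_zero (hA : 0 < A) (hB : 0 ≤ B)
    (hx : ∀ s, HasDerivAt x (x s * y s + A) s) (hy : ∀ s, HasDerivAt y (-(x s) ^ 2 - B) s) :
    Tendsto x atBot (𝓝 0) := by
  have := (tendsto_comp_neg_atBot_iff.mpr (tendsto_x_atTop_zero (hasDerivAt_reverse_x hx)
    (tendsto_y_atTop_atBot hA hB (hasDerivAt_reverse_x hx) (hasDerivAt_reverse_y hy)))).neg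
  simpa using this

theorem hasDerivAt_curve (hAB : (A : ℂ) - I * B ≠ 0)
    (hx : ∀ s, HasDerivAt x (x s * y s + A) s) (hy : ∀ s, HasDerivAt y (-(x s) ^ 2 - B) s)
    {θ : ℝ → ℝ} (hθ : ∀ s, θ s = ∫ t in (0:ℝ)..s, x t) {X : ℝ → ℂ}
    (hX : ∀ s, X s = exp (I * θ s) * (x s + I * y s) / (A - I * B)) (s : ℝ) :
    HasDerivAt X (exp (I * θ s)) s := by
  have hθ' : HasDerivAt θ (x s) s := by
    rw [funext hθ]
    have hxc : Continuous x := continuous_iff_continuousAt.mpr fun t => (hx t).continuousAt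
    exact (hxc.integral_hasStrictDerivAt 0 s).hasDerivAt
  have hz : HasDerivAt (fun u => (x u : ℂ) + I * y u)
      ((x s * y s + A : ℝ) + I * (-(x s) ^ 2 - B : ℝ)) s :=
    (hx s).ofReal_comp.add ((hy s).ofReal_comp.const_mul I)
  rw [funext hX]
  refine ((hθ'.ofReal_comp.const_mul I).cexp.mul hz).div_const _ |>.congr_deriv ?_
  rw [div_eq_iff hAB]
  push_cast
  linear_combination exp (I * θ s) * x s * y s * I_sq

end SelfSimilarODE

open SelfSimilarODE

/-- If `A > 0`, `B ≥ 0` (not both zero) and `(x, y)` solves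
`x' = xy + A`, `y' = -x² - B` on `ℝ`, with `θ(s) = ∫₀^s x` and
`X(s) = e^{iθ(s)}(x(s) + iy(s))/(A - iB)`, then
`|X|·X'/X → (B + iA)/√(A² + B²)` as `s → +∞` and
`|X|·X'/X → -(B + iA)/√(A² + B²)` as `s → -∞`. -/
theorem stmt_11 (A B : ℝ) (hA : 0 < A) (hB : 0 ≤ B) (x y : ℝ → ℝ)
    (hx : ∀ s, HasDerivAt x (x s * y s + A) s)
    (hy : ∀ s, HasDerivAt y (-(x s) ^ 2 - B) s)
    (θ : ℝ → ℝ) (hθ : ∀ s, θ s = ∫ t in (0:ℝ)..s, x t)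
    (X : ℝ → ℂ)
    (hX : ∀ s, X s = Complex.exp (Complex.I * (θ s : ℂ)) *
      ((x s : ℂ) + Complex.I * (y s : ℂ)) / ((A : ℂ) - Complex.I * (B : ℂ))) :
    Tendsto (fun s => (‖X s‖ : ℂ) * deriv X s / X s) atTop
      (nhds (((B : ℂ) + Complex.I * (A : ℂ)) / (Real.sqrt (A ^ 2 + B ^ 2) : ℂ))) ∧
    Tendsto (fun s => (‖X s‖ : ℂ) * deriv X s / X s) atBot
      (nhds (-(((B : ℂ) + Complex.I * (A : ℂ)) / (Real.sqrt (A ^ 2 + B ^ 2) : ℂ)))) := by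
  set c : ℂ := A - I * B
  have hc : c ≠ 0 := fun h => hA.ne' (by simpa [c] using congrArg re h)
  have hratio : ∀ s, (‖X s‖ : ℂ) * deriv X s / X s =
      c / ‖c‖ * (‖(x s + I * y s : ℂ)‖ / (x s + I * y s)) := fun s => by
    rw [(hasDerivAt_curve hc hx hy hθ hX s).deriv, hX s]
    exact norm_mul_div_eq_of_norm_eq_one (by simp) _ _
  have hlim : c / ‖c‖ * I = (B + I * A) / √(A ^ 2 + B ^ 2) := by
    have hnorm : ‖c‖ = √(A ^ 2 + B ^ 2) := by
      simpa [c, sub_eq_add_neg, mul_comm I] using norm_add_mul_I A (-B)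
    rw [hnorm, div_mul_eq_mul_div]
    congr 1
    linear_combination -B * I_sq
  have hyTop := tendsto_y_atTop_atBot hA hB hx hy
  have hyBot := tendsto_y_atBot_atTop hA hB hx hy
  simp only [hratio]
  rw [← hlim, ← mul_neg]
  refine ⟨tendsto_const_nhds.mul (tendsto_norm_div_self_of_im_neg ?_ ?_),
    tendsto_const_nhds.mul (tendsto_norm_div_self_of_im_pos ?_ ?_)⟩
  · simpa using (tendsto_x_atTop_zero hx hyTop).div_atBot hyTop
  · simpa using hyTop.eventually_lt_atBot 0
  · simpa using (tendsto_x_atBot_zero hA hB hx hy).div_atTop hyBot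
  · simpa using hyBot.eventually_gt_atTop 0
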